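/- arXiv:1912.04808 — 3 statements merged into one kernel-verified Lean document; each statement's English description precedes it below -/
import Mathlib

section
/- If (n_k) has nested spectrums and V(n_{ν+1}) > V(n_ν), then n_{ν+1} ≥ n_ν + 2^{max Sp(n_ν) + δ_ν} ≥ n_ν + 2^{δ_ν}, where δ_ν = V(n_{ν+1}) - V(n_ν). In particular, n_{ν+1} - n_ν ≥ 2^{V(n_{ν+1}) - V(n_ν)}. -/
open MeasureTheory Filter Set
open scoped Classical

noncomputable section

/-- `eps n j` : the j-th binary digit of `n`, as an integer (0 or 1). -/
def eps (n j : ℕ) : ℤ := if n.testBit j then 1 else 0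

/-- `binVar n` : the binary variation `V(n) = ε₀(n) + Σ_{j≥1} |ε_j(n) - ε_{j-1}(n)|`.
Digits of `n` vanish for positions `> n`, so the sum over `Icc 1 n` captures the full sum. -/
def binVar (n : ℕ) : ℕ :=
  (eps n 0).toNat + ∑ j ∈ Finset.Icc 1 n, (eps n j - eps n (j - 1)).natAbs

/-- The binary spectrum of `n` : positions of the 1's in the binary expansion. -/
def Sp (n : ℕ) : Set ℕ := {j | n.testBit j}

/-- `max Sp(n)` : for `n ≥ 1` this is the position of the highest set bit. -/
def maxSp (n : ℕ) : ℕ := Nat.log 2 n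

/-- A sequence has nested spectrums if `Sp(n_{k+1}) ∩ [0, max Sp(n_k)] = Sp(n_k)` for all k. -/
def HasNestedSpectrums (a : ℕ → ℕ) : Prop :=
  ∀ k, Sp (a (k + 1)) ∩ Set.Iic (maxSp (a k)) = Sp (a k)

/-- A sequence has unbounded variation if `sup_k V(n_k) = ∞`. -/
def UnboundedVariation (a : ℕ → ℕ) : Prop := ∀ M : ℕ, ∃ k, M < binVar (a k)

/-- The Rademacher function `r_j(x) = r(2^j x)` where `r` is 1-periodic, equal to 1 on
`[0,1/2)` and to -1 on `[1/2,1)`. -/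
def rad (j : ℕ) (x : ℝ) : ℝ := if Int.fract ((2 : ℝ) ^ j * x) < 1 / 2 then 1 else -1

/-- The Walsh function `w_n = ∏_j r_j ^ ε_j(n)`. -/
def walsh (n : ℕ) (x : ℝ) : ℝ :=
  ∏ j ∈ Finset.range (n + 1), if n.testBit j then rad j x else 1

/-- Walsh-Fourier coefficient `f̂(k) = ∫_{[0,1)} f · w_k`. -/
def whcoef (f : ℝ → ℝ) (k : ℕ) : ℝ := ∫ x in Set.Ico (0 : ℝ) 1, f x * walsh k x

/-- Partial Walsh-Fourier sum `S_m(f) = Σ_{k<m} f̂(k) w_k`. -/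
def walshSum (m : ℕ) (f : ℝ → ℝ) (x : ℝ) : ℝ :=
  ∑ k ∈ Finset.range m, whcoef f k * walsh k x

/-- The specific sequence `n_k = Σ_{j=0}^k 2^{2j}` (indexed from 0). -/
def nkSeq (k : ℕ) : ℕ := ∑ j ∈ Finset.range (k + 1), 2 ^ (2 * j)

/-- `phiSeq a φ` states that `φ` is the function `φ_{(n_k)}` associated to the sequence `a`
(indexed from 0, so `a 0` plays the role of `n_1`): `φ(0)=0`,
`φ(2^{2n_ν}) = 2^{2n_ν} V(n_ν)`, `φ` linear on `[0, 2^{2n_1}]` and on each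
`[2^{2n_ν}, 2^{2n_{ν+1}}]`. -/
def phiSeq (a : ℕ → ℕ) (φ : ℝ → ℝ) : Prop :=
  φ 0 = 0 ∧
  (∀ ν : ℕ, φ (2 ^ (2 * a ν)) = 2 ^ (2 * a ν) * binVar (a ν)) ∧
  (∃ p q : ℝ, ∀ x ∈ Set.Icc (0 : ℝ) (2 ^ (2 * a 0)), φ x = p * x + q) ∧
  (∀ ν : ℕ, ∃ p q : ℝ,
    ∀ x ∈ Set.Icc ((2 : ℝ) ^ (2 * a ν)) (2 ^ (2 * a (ν + 1))), φ x = p * x + q)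

/-- The Δ₂-condition. -/
def Delta2 (φ : ℝ → ℝ) : Prop := ∃ c > (0 : ℝ), ∃ u₀ > (0 : ℝ), ∀ u ≥ u₀, φ (2 * u) ≤ c * φ u

end

/-!
Nested spectrums mean that the lowest `size n_ν` binary digits of `n_{ν+1}` are those of `n_ν`,
so `n_{ν+1} = n_ν + 2 ^ size n_ν * t`. Writing the digits of `t` above those of `n_ν` adds `V(t)`
to the variation, minus 2 when the top block of ones of `n_ν` merges with a block of `t` starting
at its lowest digit. As `V(t) ≤ size t + ε₀(t)`, the increase `δ` is at most `size t`, that is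
`t ≥ 2 ^ (δ - 1)`.
-/

lemma eps_bit_zero (b : Bool) (n : ℕ) : eps (Nat.bit b n) 0 = b.toNat := by
  cases b <;> simp [eps]

lemma eps_bit_succ (b : Bool) (n j : ℕ) : eps (Nat.bit b n) (j + 1) = eps n j := by
  simp only [eps, Nat.testBit_bit_succ]

lemma eps_eq_zero_or_one (n j : ℕ) : eps n j = 0 ∨ eps n j = 1 := by
  unfold eps; split <;> simp

lemma eps_eq_zero_of_le {n j : ℕ} (h : n ≤ j) : eps n j = 0 := by
  have hlt : n < 2 ^ j := Nat.lt_two_pow_self.trans_le (Nat.pow_le_pow_right two_pos h)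
  simp [eps, Nat.testBit_lt_two_pow hlt]

lemma binVar_eq_sum_range {n N : ℕ} (h : n ≤ N) :
    binVar n = (eps n 0).toNat + ∑ j ∈ Finset.range N, (eps n (j + 1) - eps n j).natAbs := by
  rw [binVar, ← Finset.Ico_add_one_right_eq_Icc, Finset.sum_Ico_eq_sum_range]
  congr 1
  refine Finset.sum_subset_zero_on_sdiff (Finset.range_subset_range.2 h) ?_ ?_
  · intro j hj
    simp only [Finset.mem_sdiff, Finset.mem_range, Nat.add_sub_cancel, not_lt] at hj
    simp [eps_eq_zero_of_le hj.2, eps_eq_zero_of_le (hj.2.trans j.le_succ)]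
  · intro j _
    simp only [Nat.add_sub_cancel, add_comm 1 j]

-- `ε₀(n)` is added on the left so that no truncated subtraction occurs.
lemma binVar_bit (b : Bool) (n : ℕ) :
    binVar (Nat.bit b n) + (eps n 0).toNat =
      binVar n + b.toNat + (eps n 0 - b.toNat).natAbs := by
  rw [binVar_eq_sum_range (show Nat.bit b n ≤ 2 * n + 1 by cases b <;> simp [Nat.bit_val]),
    binVar_eq_sum_range (show n ≤ 2 * n by omega), Finset.sum_range_succ', eps_bit_zero]
  simp only [eps_bit_succ]
  rcases eps_eq_zero_or_one n 0 with h | h <;> cases b <;> simp [h] <;> omega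

lemma binVar_le_size_add (t : ℕ) : binVar t ≤ t.size + (eps t 0).toNat := by
  induction t using Nat.binaryRec' with
  | zero => simp [binVar]
  | bit b n hb ih =>
    have hbit : Nat.bit b n ≠ 0 := by
      rw [Ne, Nat.bit_eq_zero_iff]
      cases b <;> simp_all
    have hrec := binVar_bit b n
    rw [Nat.size_bit hbit, eps_bit_zero]
    rcases eps_eq_zero_or_one n 0 with h | h <;> cases b <;> simp [h] at hrec ih ⊢ <;> omega

lemma eps_zero_add_two_pow_size_mul {s : ℕ} (hs : s ≠ 0) (t : ℕ) :
    eps (s + 2 ^ s.size * t) 0 = eps s 0 := by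
  obtain ⟨k, hk⟩ : ∃ k, s.size = k + 1 :=
    Nat.exists_eq_succ_of_ne_zero (by simpa [Nat.size_eq_zero])
  rw [hk, pow_succ, mul_comm _ 2, mul_assoc]
  simp only [eps, Nat.testBit_zero, Nat.add_mul_mod_self_left]

lemma binVar_add_two_pow_size_mul {m : ℕ} (hm : m ≠ 0) (t : ℕ) :
    binVar (m + 2 ^ m.size * t) + 2 * (eps t 0).toNat = binVar m + binVar t := by
  induction m using Nat.binaryRecFromOne with
  | zero => exact absurd rfl hm
  | one =>
    have hrec := binVar_bit true t
    have hone : binVar 1 = 2 := by decide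
    rw [Nat.bit_val] at hrec
    rw [Nat.size_one, pow_one, hone, add_comm 1]
    rcases eps_eq_zero_or_one t 0 with h | h <;> simp [h] at hrec ⊢ <;> omega
  | bit b s hs ih =>
    have hbit : Nat.bit b s + 2 ^ (Nat.bit b s).size * t = Nat.bit b (s + 2 ^ s.size * t) := by
      rw [Nat.size_bit hm, Nat.bit_val, Nat.bit_val, pow_succ]
      ring
    have hu := binVar_bit b (s + 2 ^ s.size * t)
    have hs' := binVar_bit b s
    rw [eps_zero_add_two_pow_size_mul hs] at hu
    rw [hbit]
    have := ih hs
    omega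

lemma binVar_add_two_pow_size_mul_le {m : ℕ} (hm : m ≠ 0) (t : ℕ) :
    binVar (m + 2 ^ m.size * t) ≤ binVar m + t.size := by
  have := binVar_add_two_pow_size_mul hm t
  have := binVar_le_size_add t
  omega

lemma log_two_add_one_eq_size {m : ℕ} (hm : m ≠ 0) : Nat.log 2 m + 1 = m.size :=
  le_antisymm (Nat.lt_size.2 (Nat.pow_log_le_self 2 hm))
    (Nat.size_le.2 (Nat.lt_pow_succ_log_self one_lt_two m))

lemma mod_two_pow_size_eq_of_Sp_inter_eq {m n : ℕ} (hm : m ≠ 0)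
    (h : Sp n ∩ Iic (maxSp m) = Sp m) : n % 2 ^ m.size = m := by
  refine Nat.eq_of_testBit_eq fun j => ?_
  rw [Nat.testBit_mod_two_pow, ← log_two_add_one_eq_size hm]
  by_cases hj : j < Nat.log 2 m + 1
  · have hj' := Set.ext_iff.1 h j
    simp only [Sp, maxSp, Set.mem_inter_iff, Set.mem_ofPred_eq, Set.mem_Iic,
      show j ≤ Nat.log 2 m by omega, and_true] at hj'
    simp [hj, Bool.eq_iff_iff.2 hj']
  · simp [hj, Nat.testBit_lt_two_pow ((Nat.lt_pow_succ_log_self one_lt_two m).trans_le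
      (Nat.pow_le_pow_right two_pos (not_lt.1 hj)))]

theorem nested_gap_estimate_general (a : ℕ → ℕ) (hpos : ∀ k, 1 ≤ a k)
    (hnest : HasNestedSpectrums a) (ν : ℕ)
    (h : binVar (a ν) < binVar (a (ν + 1))) :
    a ν + 2 ^ (maxSp (a ν) + (binVar (a (ν + 1)) - binVar (a ν))) ≤ a (ν + 1) ∧
    a ν + 2 ^ (binVar (a (ν + 1)) - binVar (a ν)) ≤ a (ν + 1) := by
  set m := a ν
  set n := a (ν + 1)
  set δ := binVar n - binVar m
  have hm : m ≠ 0 := Nat.one_le_iff_ne_zero.1 (hpos ν)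
  set t := n / 2 ^ m.size
  have hn : n = m + 2 ^ m.size * t := by
    have := Nat.mod_add_div n (2 ^ m.size)
    rwa [mod_two_pow_size_eq_of_Sp_inter_eq hm (hnest ν), eq_comm] at this
  have ht : 2 ^ (δ - 1) ≤ t := by
    have := binVar_add_two_pow_size_mul_le hm t
    rw [← hn] at this
    exact Nat.lt_size.1 (by omega)
  have hsize : maxSp m + 1 = m.size := log_two_add_one_eq_size hm
  have hgap : m + 2 ^ (maxSp m + δ) ≤ n := by
    rw [hn, show maxSp m + δ = m.size + (δ - 1) by omega, pow_add]
    gcongr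
  exact ⟨hgap, le_trans (by gcongr <;> omega) hgap⟩

theorem nested_gap_estimate (a : ℕ → ℕ) (ha : StrictMono a) (hpos : ∀ k, 1 ≤ a k)
    (hnest : HasNestedSpectrums a) (ν : ℕ)
    (h : binVar (a ν) < binVar (a (ν + 1))) :
    a ν + 2 ^ (maxSp (a ν) + (binVar (a (ν + 1)) - binVar (a ν))) ≤ a (ν + 1) ∧
    a ν + 2 ^ (binVar (a (ν + 1)) - binVar (a ν)) ≤ a (ν + 1) :=
  nested_gap_estimate_general a hpos hnest ν h
end

section
/- For the sequence n_k = Σ_{j=0}^k 2^{2j}, the function φ_{(n_k)} satisfies c·u·log₂ log₂ u ≤ φ_{(n_k)}(u) ≤ C·u·log₂ log₂ u for all u ≥ 8, where c, C > 0 are absolute constants. -/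
open MeasureTheory Filter Set
open scoped Classical

/-! On `[2^{2n_ν}, 2^{2n_{ν+1}}]` the function `φ` is affine, so `φ(u)/u` lies between its values
`V(n_ν) = 2ν+2` and `V(n_{ν+1}) = 2ν+4` at the endpoints. On the same interval `log₂ u` lies
between `2n_ν ≥ 2^{2ν+1}` and `2n_{ν+1} ≤ 2^{2ν+4}`, so `log₂ log₂ u ∈ [2ν+1, 2ν+4]`; hence
`φ(u)/u` and `log₂ log₂ u` are comparable uniformly in `ν`. -/

lemma exists_mem_Ico_succ {α : Type*} [LinearOrder α] {s : ℕ → α} {u : α}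
    (h₀ : s 0 ≤ u) (hu : ∃ n, u < s n) : ∃ ν, u ∈ Ico (s ν) (s (ν + 1)) := by
  by_contra! h
  have hle (n : ℕ) : s n ≤ u := by
    induction n with
    | zero => exact h₀
    | succ n ih => exact not_lt.1 fun hlt => h n ⟨ih, hlt⟩
  obtain ⟨n, hn⟩ := hu
  exact (hle n).not_gt hn

lemma mul_le_affine_and_affine_le_mul {p q A B a b x : ℝ} (hA : 0 ≤ A) (hAB : A < B)
    (hab : a ≤ b) (hpA : p * A + q = a * A) (hpB : p * B + q = b * B) (hx : x ∈ Icc A B) :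
    a * x ≤ p * x + q ∧ p * x + q ≤ b * x := by
  have hbp : b ≤ p := by nlinarith
  constructor <;> nlinarith [hx.1, hx.2]

lemma Real.logb_mem_Icc_of_mem_Icc_pow {b x : ℝ} {m n : ℕ} (hb : 1 < b)
    (hx : x ∈ Icc (b ^ m) (b ^ n)) : logb b x ∈ Icc (m : ℝ) n := by
  have hlogb_pow (k : ℕ) : logb b (b ^ k) = k := by
    rw [logb_pow, logb_self_eq_one hb, mul_one]
  have hpos : 0 < b ^ m := pow_pos (by linarith) m
  rw [← hlogb_pow m, ← hlogb_pow n]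
  exact ⟨logb_le_logb_of_le hb hpos hx.1, logb_le_logb_of_le hb (hpos.trans_le hx.1) hx.2⟩

lemma phiSeq.mul_le_and_le_mul {a : ℕ → ℕ} {φ : ℝ → ℝ} (hφ : phiSeq a φ) {ν : ℕ}
    (ha : a ν < a (ν + 1)) (hV : binVar (a ν) ≤ binVar (a (ν + 1))) {x : ℝ}
    (hx : x ∈ Icc ((2 : ℝ) ^ (2 * a ν)) (2 ^ (2 * a (ν + 1)))) :
    binVar (a ν) * x ≤ φ x ∧ φ x ≤ binVar (a (ν + 1)) * x := by
  obtain ⟨-, hval, -, hlin⟩ := hφ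
  obtain ⟨p, q, hpq⟩ := hlin ν
  have hAB : (2 : ℝ) ^ (2 * a ν) < 2 ^ (2 * a (ν + 1)) := pow_lt_pow_right₀ one_lt_two (by omega)
  rw [hpq x hx]
  refine mul_le_affine_and_affine_le_mul (by positivity) hAB (by exact_mod_cast hV) ?_ ?_ hx
  · rw [← hpq _ (left_mem_Icc.2 hAB.le), hval, mul_comm]
  · rw [← hpq _ (right_mem_Icc.2 hAB.le), hval, mul_comm]

lemma nkSeq_zero : nkSeq 0 = 1 := by simp [nkSeq]

lemma nkSeq_succ (k : ℕ) : nkSeq (k + 1) = 4 * nkSeq k + 1 := by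
  rw [nkSeq, Finset.sum_range_succ', nkSeq, Finset.mul_sum]
  congr 1
  refine Finset.sum_congr rfl fun j _ => ?_
  ring

lemma two_pow_le_nkSeq (k : ℕ) : 2 ^ (2 * k) ≤ nkSeq k := by
  induction k with
  | zero => simp [nkSeq_zero]
  | succ k ih => rw [nkSeq_succ, mul_add, pow_add]; omega

lemma nkSeq_lt_two_pow (k : ℕ) : nkSeq k < 2 ^ (2 * k + 1) := by
  induction k with
  | zero => simp [nkSeq_zero]
  | succ k ih =>
    rw [nkSeq_succ, show 2 * (k + 1) + 1 = 2 * k + 1 + 2 by ring, pow_add]; omega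

lemma testBit_nkSeq_iff (k i : ℕ) : (nkSeq k).testBit i ↔ i % 2 = 0 ∧ i ≤ 2 * k := by
  induction k generalizing i with
  | zero =>
    rw [nkSeq_zero, Nat.testBit_one_eq_true_iff_self_eq_zero]; omega
  | succ k ih =>
    have h4 : 4 * nkSeq k + 1 = 2 ^ 2 * nkSeq k + 1 := by norm_num
    rw [nkSeq_succ, h4, Nat.testBit_two_pow_mul_add _ (by norm_num)]
    split_ifs with hi
    · rw [Nat.testBit_one_eq_true_iff_self_eq_zero]; omega
    · rw [ih]; omega

lemma natAbs_eps_nkSeq_sub {k j : ℕ} (hj : 1 ≤ j) :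
    (eps (nkSeq k) j - eps (nkSeq k) (j - 1)).natAbs = if j ≤ 2 * k + 1 then 1 else 0 := by
  simp only [eps, testBit_nkSeq_iff]
  split_ifs <;> omega

lemma binVar_nkSeq (k : ℕ) : binVar (nkSeq k) = 2 * k + 2 := by
  have hlen : 2 * k + 1 ≤ nkSeq k := by
    have := Nat.lt_two_pow_self (n := 2 * k)
    have := two_pow_le_nkSeq k
    omega
  have hfilter : (Finset.Icc 1 (nkSeq k)).filter (· ≤ 2 * k + 1) = Finset.Icc 1 (2 * k + 1) := by
    ext j; simp only [Finset.mem_filter, Finset.mem_Icc]; omega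
  have h0 : eps (nkSeq k) 0 = 1 := if_pos ((testBit_nkSeq_iff k 0).2 ⟨rfl, Nat.zero_le _⟩)
  rw [binVar, h0, Finset.sum_congr rfl fun j hj => natAbs_eps_nkSeq_sub (Finset.mem_Icc.1 hj).1,
    Finset.sum_boole, hfilter, Nat.card_Icc]
  simp only [Int.toNat_one, Nat.cast_id]
  omega

lemma exists_mem_Icc_two_pow_nkSeq {u : ℝ} (hu : 4 ≤ u) :
    ∃ ν, u ∈ Icc ((2 : ℝ) ^ (2 * nkSeq ν)) (2 ^ (2 * nkSeq (ν + 1))) := by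
  have hunbounded : ∃ n, u < (2 : ℝ) ^ (2 * nkSeq n) := by
    obtain ⟨m, hm⟩ := pow_unbounded_of_one_lt u one_lt_two
    refine ⟨m, hm.trans_le (pow_le_pow_right₀ one_le_two ?_)⟩
    have := Nat.lt_two_pow_self (n := 2 * m)
    have := two_pow_le_nkSeq m
    omega
  obtain ⟨ν, hν⟩ := exists_mem_Ico_succ (s := fun n => (2 : ℝ) ^ (2 * nkSeq n))
    (by norm_num [nkSeq_zero, hu]) hunbounded
  exact ⟨ν, Ico_subset_Icc_self hν⟩

lemma logb_logb_mem_Icc_of_mem_Icc_two_pow_nkSeq {u : ℝ} {ν : ℕ}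
    (hu : u ∈ Icc ((2 : ℝ) ^ (2 * nkSeq ν)) (2 ^ (2 * nkSeq (ν + 1)))) :
    Real.logb 2 (Real.logb 2 u) ∈ Icc (2 * ν + 1 : ℝ) (2 * ν + 4) := by
  have hlog := Real.logb_mem_Icc_of_mem_Icc_pow one_lt_two hu
  have hlo : (2 : ℝ) ^ (2 * ν + 1) ≤ (2 * nkSeq ν : ℕ) := by
    have := two_pow_le_nkSeq ν
    exact_mod_cast (show 2 ^ (2 * ν + 1) ≤ 2 * nkSeq ν by rw [pow_succ]; omega)
  have hhi : ((2 * nkSeq (ν + 1) : ℕ) : ℝ) ≤ 2 ^ (2 * ν + 4) := by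
    have := nkSeq_lt_two_pow (ν + 1)
    exact_mod_cast (show 2 * nkSeq (ν + 1) ≤ 2 ^ (2 * ν + 4) by
      rw [show 2 * ν + 4 = 2 * (ν + 1) + 1 + 1 by ring, pow_succ _ (2 * (ν + 1) + 1)]; omega)
  have := Real.logb_mem_Icc_of_mem_Icc_pow one_lt_two ⟨hlo.trans hlog.1, hlog.2.trans hhi⟩
  exact_mod_cast this

theorem phiSeq_nkSeq_loglog_equiv (φ : ℝ → ℝ) (hφ : phiSeq nkSeq φ) :
    ∃ c C : ℝ, 0 < c ∧ 0 < C ∧ ∀ u : ℝ, 8 ≤ u →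
      c * u * Real.logb 2 (Real.logb 2 u) ≤ φ u ∧
      φ u ≤ C * u * Real.logb 2 (Real.logb 2 u) := by
  refine ⟨1 / 2, 4, by norm_num, by norm_num, fun u hu => ?_⟩
  obtain ⟨ν, hν⟩ := exists_mem_Icc_two_pow_nkSeq (by linarith : (4 : ℝ) ≤ u)
  have hφν := hφ.mul_le_and_le_mul (by rw [nkSeq_succ]; omega)
    (by rw [binVar_nkSeq, binVar_nkSeq]; omega) hν
  rw [binVar_nkSeq, binVar_nkSeq] at hφν
  push_cast at hφν
  obtain ⟨hφ₁, hφ₂⟩ := hφν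
  obtain ⟨hL₁, hL₂⟩ := logb_logb_mem_Icc_of_mem_Icc_two_pow_nkSeq hν
  constructor <;> nlinarith
end

section
/- Let α: [0,∞) → [0,∞) be an increasing convex function with α(u)/u → ∞ satisfying the Δ₂-condition, and let β: [0,∞) → [0,∞) satisfy β(u) = o(α(u)) as u → ∞. Then there exists γ: [0,∞) → [0,∞) such that: (1) γ(0) = 0 and γ is increasing and convex; (2) γ(u)/u → ∞ as u → ∞; (3) γ satisfies the Δ₂-condition; (4) γ(u) ≥ β(u) for all sufficiently large u; (5) γ(u) = o(α(u)) as u → ∞. -/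
open MeasureTheory Filter Set
open scoped Classical

/-!
Replacing `α` by `f = α - α 0` changes nothing asymptotically and gives `f 0 = 0`. Choose a
weight `w t ↓ 0` dominating `β v / f v` for `v ≥ t` and also `√(t / f t)`. On each dyadic
interval `[t, 2t]`, `t = 2ʲ s`, take `w t` times the chord of `f`, and let `γ` be the supremum
of these affine functions (and of `u`). Then `γ` is convex, `γ ≥ w t * f ≥ β` on `[t, 2t]`, and
`γ u / u ≥ √(f t / t) → ∞`. Chords lie below `f` outside their interval, so the late pieces are
at most `w t * f (2u)`, which is `o(f)` by Δ₂, while the finitely many early ones are dominated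
by one affine function; hence `γ = o(f)`. For Δ₂, doubling the argument at most triples the
early chords, and multiplies the late ones by at most the Δ₂-constant of `f` squared.
-/

open Topology Asymptotics

noncomputable def chord (f : ℝ → ℝ) (p q x : ℝ) : ℝ := f p + slope f p q * (x - p)

section Chord

variable {s : Set ℝ} {f : ℝ → ℝ} {p q t T x u : ℝ}

lemma add_slope_mul_sub (f : ℝ → ℝ) (p x : ℝ) : f p + slope f p x * (x - p) = f x := by
  have h := sub_smul_slope_vadd f p x
  rw [smul_eq_mul, vadd_eq_add] at h
  linarith

@[simp] lemma chord_self_left : chord f p q p = f p := by simp [chord]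

lemma chord_self_right : chord f p q q = f q := add_slope_mul_sub f p q

lemma chord_add_mul {a b : ℝ} (hab : a + b = 1) (x y : ℝ) :
    chord f p q (a * x + b * y) = a * chord f p q x + b * chord f p q y := by
  simp only [chord]
  linear_combination (slope f p q * p - f p) * hab

theorem ConvexOn.apply_le_chord (hf : ConvexOn ℝ s f) (hp : p ∈ s) (hq : q ∈ s)
    (hpx : p ≤ x) (hxq : x ≤ q) : f x ≤ chord f p q x := by
  rcases hpx.eq_or_lt with rfl | hpx
  · simp
  have hx : x ∈ s := hf.1.ordConnected.out hp hq ⟨hpx.le, hxq⟩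
  have hslope : slope f p x ≤ slope f p q :=
    hf.slope_mono hp ⟨hx, hpx.ne'⟩ ⟨hq, (hpx.trans_le hxq).ne'⟩ hxq
  rw [← add_slope_mul_sub f p x, chord]
  nlinarith

theorem ConvexOn.chord_le_apply (hf : ConvexOn ℝ s f) (hp : p ∈ s) (hq : q ∈ s) (hx : x ∈ s)
    (hpq : p < q) (hx' : x ≤ p ∨ q ≤ x) : chord f p q x ≤ f x := by
  rw [← add_slope_mul_sub f p x, chord]
  rcases hx' with hxp | hqx
  · rcases hxp.eq_or_lt with rfl | hxp
    · simp
    have := hf.slope_mono hp ⟨hx, hxp.ne⟩ ⟨hq, hpq.ne'⟩ (hxp.trans hpq).le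
    nlinarith
  · have := hf.slope_mono hp ⟨hq, hpq.ne'⟩ ⟨hx, (hpq.trans_le hqx).ne'⟩ hqx
    nlinarith

lemma slope_two_mul_nonneg (hfm : MonotoneOn f (Ici 0)) (ht : 0 ≤ t) :
    0 ≤ slope f t (2 * t) := by
  rw [slope_def_field]
  exact div_nonneg (sub_nonneg.2 (hfm ht (mem_Ici.2 (by linarith)) (by linarith))) (by linarith)

lemma chord_two_mul_le_three_mul (hft : 0 ≤ f t) (hm : 0 ≤ slope f t (2 * t))
    (hu : 2 * t ≤ u) : chord f t (2 * t) (2 * u) ≤ 3 * chord f t (2 * t) u := by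
  simp only [chord]
  nlinarith [mul_nonneg hm (sub_nonneg.2 hu)]

theorem ConvexOn.chord_le_apply_two_mul (hf : ConvexOn ℝ (Ici 0) f)
    (hfm : MonotoneOn f (Ici 0)) (ht : 0 < t) (hu : 0 ≤ u) :
    chord f t (2 * t) u ≤ f (2 * u) := by
  have hfu : f u ≤ f (2 * u) := hfm (mem_Ici.2 hu) (mem_Ici.2 (by linarith)) (by linarith)
  rcases le_or_gt u t with hut | htu
  · exact (hf.chord_le_apply (mem_Ici.2 ht.le) (mem_Ici.2 (by linarith)) hu (by linarith)
      (Or.inl hut)).trans hfu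
  rcases le_or_gt u (2 * t) with hu2t | h2tu
  · calc chord f t (2 * t) u ≤ chord f t (2 * t) (2 * t) := by
          simp only [chord]
          nlinarith [slope_two_mul_nonneg hfm ht.le]
      _ = f (2 * t) := chord_self_right
      _ ≤ f (2 * u) := hfm (mem_Ici.2 (by linarith)) (mem_Ici.2 (by linarith)) (by linarith)
  · exact (hf.chord_le_apply (mem_Ici.2 ht.le) (mem_Ici.2 (by linarith)) hu (by linarith)
      (Or.inr h2tu.le)).trans hfu

theorem ConvexOn.slope_two_mul_mono (hf : ConvexOn ℝ (Ici 0) f) (ht : 0 < t) (htT : t ≤ T) :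
    slope f t (2 * t) ≤ slope f T (2 * T) := by
  rcases htT.eq_or_lt with rfl | htT
  · rfl
  have hT : 0 < T := ht.trans htT
  calc slope f t (2 * t) ≤ slope f t (2 * T) :=
        hf.slope_mono (mem_Ici.2 ht.le) ⟨mem_Ici.2 (by linarith), (by linarith : t < 2 * t).ne'⟩
          ⟨mem_Ici.2 (by linarith), (by linarith : t < 2 * T).ne'⟩ (by linarith)
    _ = slope f (2 * T) t := slope_comm f _ _
    _ ≤ slope f (2 * T) T :=
        hf.slope_mono (mem_Ici.2 (by linarith)) ⟨mem_Ici.2 ht.le, (by linarith : t < 2 * T).ne⟩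
          ⟨mem_Ici.2 hT.le, (by linarith : T < 2 * T).ne⟩ htT.le
    _ = slope f T (2 * T) := slope_comm f _ _

theorem ConvexOn.chord_two_mul_le_of_le (hf : ConvexOn ℝ (Ici 0) f) (hfm : MonotoneOn f (Ici 0))
    (ht : 0 < t) (htT : t ≤ T) (hu : 0 ≤ u) :
    chord f t (2 * t) u ≤ f T + slope f T (2 * T) * u := by
  have hm := slope_two_mul_nonneg hfm ht.le
  have hft : f t ≤ f T := hfm ht.le (ht.le.trans htT) htT
  have hslope := hf.slope_two_mul_mono ht htT
  simp only [chord]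
  nlinarith [mul_le_mul_of_nonneg_right hslope hu, mul_nonneg hm ht.le]

theorem ConvexOn.div_self_le_div_self (hf : ConvexOn ℝ (Ici 0) f) (hf0 : f 0 = 0)
    (hx : 0 < x) (hxu : x ≤ u) : f x / x ≤ f u / u := by
  have h := hf.slope_mono self_mem_Ici ⟨hx.le, hx.ne'⟩
    ⟨hx.le.trans hxu, (hx.trans_le hxu).ne'⟩ hxu
  simpa [slope_def_field, hf0] using h

theorem ConvexOn.strictMonoOn_of_pos (hf : ConvexOn ℝ (Ici 0) f) (hf0 : f 0 = 0)
    (hpos : ∀ x, 0 < x → 0 < f x) : StrictMonoOn f (Ici 0) := by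
  intro x hx u hu hxu
  rcases (mem_Ici.1 hx).eq_or_lt with rfl | hx
  · simpa [hf0] using hpos u hxu
  have hu : 0 < u := hx.trans hxu
  have h := hf.div_self_le_div_self hf0 hx hxu.le
  rw [div_le_div_iff₀ hx hu] at h
  nlinarith [hpos u hu]

end Chord

-- `0` when `ρ` is unbounded above on `[t, ∞)`.
noncomputable def tailSup (ρ : ℝ → ℝ) (t : ℝ) : ℝ := sSup (ρ '' Ici t)

section TailSup

variable {ρ : ℝ → ℝ} {s t v M : ℝ}

lemma le_tailSup (h : BddAbove (ρ '' Ici t)) (hv : t ≤ v) : ρ v ≤ tailSup ρ t :=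
  le_csSup h (mem_image_of_mem ρ hv)

lemma tailSup_le (h : ∀ v, t ≤ v → ρ v ≤ M) : tailSup ρ t ≤ M :=
  csSup_le (nonempty_Ici.image ρ) (by rintro _ ⟨v, hv, rfl⟩; exact h v hv)

lemma tailSup_nonneg (hρ : ∀ v, 0 ≤ ρ v) (t : ℝ) : 0 ≤ tailSup ρ t :=
  Real.sSup_nonneg (by rintro _ ⟨v, -, rfl⟩; exact hρ v)

lemma antitoneOn_tailSup (h : BddAbove (ρ '' Ici s)) : AntitoneOn (tailSup ρ) (Ici s) :=
  fun _ ht _ _ htt' => csSup_le_csSup (h.mono (image_mono (Ici_subset_Ici.2 ht)))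
    (nonempty_Ici.image ρ) (image_mono (Ici_subset_Ici.2 htt'))

lemma tendsto_tailSup (hρ0 : ∀ v, 0 ≤ ρ v) (hρ : Tendsto ρ atTop (𝓝 0)) :
    Tendsto (tailSup ρ) atTop (𝓝 0) := by
  refine tendsto_order.2 ⟨fun a ha => .of_forall fun t => ha.trans_le (tailSup_nonneg hρ0 t),
    fun b hb => ?_⟩
  obtain ⟨T, hT⟩ := eventually_atTop.1 (hρ.eventually (eventually_le_nhds (half_pos hb)))
  filter_upwards [eventually_ge_atTop T] with t ht
  exact (tailSup_le fun v hv => hT v (ht.trans hv)).trans_lt (half_lt_self hb)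

end TailSup

lemma MonotoneOn.apply_nonneg {f : ℝ → ℝ} {u : ℝ} (hfm : MonotoneOn f (Ici 0)) (hf0 : f 0 = 0)
    (hu : 0 ≤ u) : 0 ≤ f u := by
  simpa [hf0] using hfm self_mem_Ici hu hu

lemma eventually_add_mul_le_mul {f : ℝ → ℝ} (hfu : Tendsto (fun u => f u / u) atTop atTop)
    (c m : ℝ) {ε : ℝ} (hε : 0 < ε) : ∀ᶠ u in atTop, c + m * u ≤ ε * f u := by
  filter_upwards [hfu.eventually_ge_atTop ((|c| + |m|) / ε), eventually_ge_atTop 1] with u h hu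
  rw [div_le_div_iff₀ hε (by linarith)] at h
  nlinarith [mul_le_mul_of_nonneg_left hu (abs_nonneg c), le_abs_self c,
    mul_le_mul_of_nonneg_right (le_abs_self m) (zero_le_one.trans hu)]

lemma exists_dyadic_mem {s u : ℝ} (hs : 0 < s) (hu : s ≤ u) :
    ∃ j : ℕ, 2 ^ j * s ≤ u ∧ u ≤ 2 * (2 ^ j * s) := by
  obtain ⟨j, h₁, h₂⟩ := exists_nat_pow_near ((one_le_div hs).2 hu) one_lt_two
  refine ⟨j, (le_div_iff₀ hs).1 h₁, ?_⟩
  rw [div_lt_iff₀ hs, pow_succ] at h₂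
  linarith

noncomputable def chordPiece (f w : ℝ → ℝ) (t u : ℝ) : ℝ := w t * chord f t (2 * t) u

noncomputable def chordSup (f w : ℝ → ℝ) (s u : ℝ) : ℝ :=
  max u (⨆ j : ℕ, chordPiece f w (2 ^ j * s) u)

section ChordSup

variable {f w : ℝ → ℝ} {s t u K M : ℝ}

lemma chordPiece_add_mul {a b : ℝ} (hab : a + b = 1) (x y : ℝ) :
    chordPiece f w t (a * x + b * y) = a * chordPiece f w t x + b * chordPiece f w t y := by
  simp only [chordPiece, chord_add_mul hab]
  ring

lemma chordPiece_le (hf : ConvexOn ℝ (Ici 0) f) (hfm : MonotoneOn f (Ici 0)) (ht : 0 < t)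
    (hwt : 0 ≤ w t) (hu : 0 ≤ u) : chordPiece f w t u ≤ w t * f (2 * u) :=
  mul_le_mul_of_nonneg_left (hf.chord_le_apply_two_mul hfm ht hu) hwt

lemma le_dyadic (hs : 0 < s) (j : ℕ) : s ≤ 2 ^ j * s :=
  le_mul_of_one_le_left hs.le (one_le_pow₀ one_le_two)

lemma bddAbove_chordPiece (hf : ConvexOn ℝ (Ici 0) f) (hfm : MonotoneOn f (Ici 0))
    (hf0 : f 0 = 0) (hs : 0 < s) (hw0 : ∀ t, 0 ≤ w t) (hw : AntitoneOn w (Ici s))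
    (hu : 0 ≤ u) : BddAbove (range fun j : ℕ => chordPiece f w (2 ^ j * s) u) := by
  refine ⟨w s * f (2 * u), ?_⟩
  rintro _ ⟨j, rfl⟩
  exact (chordPiece_le hf hfm (by positivity) (hw0 _) hu).trans <|
    mul_le_mul_of_nonneg_right (hw self_mem_Ici (le_dyadic hs j) (le_dyadic hs j))
      (hfm.apply_nonneg hf0 (by linarith))

lemma chordPiece_le_chordSup (hf : ConvexOn ℝ (Ici 0) f) (hfm : MonotoneOn f (Ici 0))
    (hf0 : f 0 = 0) (hs : 0 < s) (hw0 : ∀ t, 0 ≤ w t) (hw : AntitoneOn w (Ici s))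
    (hu : 0 ≤ u) (j : ℕ) : chordPiece f w (2 ^ j * s) u ≤ chordSup f w s u :=
  (le_ciSup (bddAbove_chordPiece hf hfm hf0 hs hw0 hw hu) j).trans (le_max_right _ _)

lemma self_le_chordSup : u ≤ chordSup f w s u := le_max_left _ _

lemma chordSup_le (hu : u ≤ M) (h : ∀ j : ℕ, chordPiece f w (2 ^ j * s) u ≤ M) :
    chordSup f w s u ≤ M :=
  max_le hu (ciSup_le h)

lemma chordSup_zero (hf : ConvexOn ℝ (Ici 0) f) (hfm : MonotoneOn f (Ici 0)) (hf0 : f 0 = 0)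
    (hs : 0 < s) (hw0 : ∀ t, 0 ≤ w t) : chordSup f w s 0 = 0 :=
  le_antisymm (chordSup_le le_rfl fun j => by
    simpa [hf0] using chordPiece_le hf hfm (by positivity : 0 < 2 ^ j * s) (hw0 _) le_rfl)
    self_le_chordSup

lemma convexOn_chordSup (hf : ConvexOn ℝ (Ici 0) f) (hfm : MonotoneOn f (Ici 0))
    (hf0 : f 0 = 0) (hs : 0 < s) (hw0 : ∀ t, 0 ≤ w t) (hw : AntitoneOn w (Ici s)) :
    ConvexOn ℝ (Ici 0) (chordSup f w s) := by
  refine ⟨convex_Ici 0, fun x hx y hy a b ha hb hab => ?_⟩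
  simp only [smul_eq_mul]
  refine chordSup_le (add_le_add (mul_le_mul_of_nonneg_left self_le_chordSup ha)
    (mul_le_mul_of_nonneg_left self_le_chordSup hb)) fun j => ?_
  rw [chordPiece_add_mul hab]
  exact add_le_add
    (mul_le_mul_of_nonneg_left (chordPiece_le_chordSup hf hfm hf0 hs hw0 hw hx j) ha)
    (mul_le_mul_of_nonneg_left (chordPiece_le_chordSup hf hfm hf0 hs hw0 hw hy j) hb)

lemma mul_le_chordSup_of_mem (hf : ConvexOn ℝ (Ici 0) f) (hfm : MonotoneOn f (Ici 0))
    (hf0 : f 0 = 0) (hs : 0 < s) (hw0 : ∀ t, 0 ≤ w t) (hw : AntitoneOn w (Ici s)) {j : ℕ}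
    (hj₁ : 2 ^ j * s ≤ u) (hj₂ : u ≤ 2 * (2 ^ j * s)) :
    w (2 ^ j * s) * f u ≤ chordSup f w s u := by
  have ht : 0 ≤ 2 ^ j * s := by positivity
  exact (mul_le_mul_of_nonneg_left (hf.apply_le_chord ht (mem_Ici.2 (by linarith)) hj₁ hj₂)
    (hw0 _)).trans (chordPiece_le_chordSup hf hfm hf0 hs hw0 hw (ht.trans hj₁) j)

lemma mul_le_chordSup (hf : ConvexOn ℝ (Ici 0) f) (hfm : MonotoneOn f (Ici 0))
    (hf0 : f 0 = 0) (hs : 0 < s) (hw0 : ∀ t, 0 ≤ w t) (hw : AntitoneOn w (Ici s)) {j : ℕ}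
    (hu : s ≤ u) (hj : u ≤ 2 * (2 ^ j * s)) : w (2 ^ j * s) * f u ≤ chordSup f w s u := by
  rcases le_total (2 ^ j * s) u with hju | huj
  · exact mul_le_chordSup_of_mem hf hfm hf0 hs hw0 hw hju hj
  obtain ⟨i, hi₁, hi₂⟩ := exists_dyadic_mem hs hu
  calc w (2 ^ j * s) * f u ≤ w (2 ^ i * s) * f u :=
        mul_le_mul_of_nonneg_right (hw (le_dyadic hs i) (le_dyadic hs j) (hi₁.trans huj))
          (hfm.apply_nonneg hf0 (by linarith))
    _ ≤ chordSup f w s u := mul_le_chordSup_of_mem hf hfm hf0 hs hw0 hw hi₁ hi₂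

lemma chordSup_two_mul_le (hf : ConvexOn ℝ (Ici 0) f) (hfm : MonotoneOn f (Ici 0))
    (hf0 : f 0 = 0) (hs : 0 < s) (hw0 : ∀ t, 0 ≤ w t) (hw : AntitoneOn w (Ici s))
    (hK0 : 0 ≤ K) (hK : ∀ u, s ≤ u → f (2 * u) ≤ K * f u) (hu : s ≤ u) :
    chordSup f w s (2 * u) ≤ max 3 (K ^ 2) * chordSup f w s u := by
  have hu0 : 0 ≤ u := hs.le.trans hu
  have hγ : u ≤ chordSup f w s u := self_le_chordSup
  refine chordSup_le (by nlinarith [le_max_left 3 (K ^ 2)]) fun j => ?_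
  have ht : 0 < 2 ^ j * s := by positivity
  rcases le_or_gt (2 * (2 ^ j * s)) u with h2tu | hu2t
  · calc chordPiece f w (2 ^ j * s) (2 * u)
        ≤ w (2 ^ j * s) * (3 * chord f (2 ^ j * s) (2 * (2 ^ j * s)) u) :=
          mul_le_mul_of_nonneg_left (chord_two_mul_le_three_mul
            (hfm.apply_nonneg hf0 ht.le) (slope_two_mul_nonneg hfm ht.le) h2tu) (hw0 _)
      _ = 3 * chordPiece f w (2 ^ j * s) u := by rw [chordPiece]; ring
      _ ≤ 3 * chordSup f w s u := by
          gcongr; exact chordPiece_le_chordSup hf hfm hf0 hs hw0 hw hu0 j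
      _ ≤ max 3 (K ^ 2) * chordSup f w s u :=
          mul_le_mul_of_nonneg_right (le_max_left _ _) (by linarith)
  · have hf4 : f (2 * (2 * u)) ≤ K ^ 2 * f u :=
      calc f (2 * (2 * u)) ≤ K * f (2 * u) := hK _ (by linarith)
        _ ≤ K * (K * f u) := mul_le_mul_of_nonneg_left (hK u hu) hK0
        _ = K ^ 2 * f u := by ring
    calc chordPiece f w (2 ^ j * s) (2 * u) ≤ w (2 ^ j * s) * f (2 * (2 * u)) :=
          chordPiece_le hf hfm ht (hw0 _) (by linarith)
      _ ≤ w (2 ^ j * s) * (K ^ 2 * f u) := mul_le_mul_of_nonneg_left hf4 (hw0 _)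
      _ = K ^ 2 * (w (2 ^ j * s) * f u) := mul_left_comm _ _ _
      _ ≤ K ^ 2 * chordSup f w s u := by
          gcongr; exact mul_le_chordSup hf hfm hf0 hs hw0 hw hu hu2t.le
      _ ≤ max 3 (K ^ 2) * chordSup f w s u :=
          mul_le_mul_of_nonneg_right (le_max_right _ _) (by linarith)

lemma tendsto_chordSup_div_atTop (hf : ConvexOn ℝ (Ici 0) f) (hfm : MonotoneOn f (Ici 0))
    (hf0 : f 0 = 0) (hs : 0 < s) (hw0 : ∀ t, 0 ≤ w t) (hw : AntitoneOn w (Ici s))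
    (hwf : Tendsto (fun t => w t * (f t / t)) atTop atTop) :
    Tendsto (fun u => chordSup f w s u / u) atTop atTop := by
  refine tendsto_atTop.2 fun M => ?_
  obtain ⟨T, hT⟩ := eventually_atTop.1 (tendsto_atTop.1 hwf M)
  filter_upwards [eventually_ge_atTop s, eventually_ge_atTop (2 * T)] with u hsu hTu
  obtain ⟨j, hj₁, hj₂⟩ := exists_dyadic_mem hs hsu
  have ht : 0 < 2 ^ j * s := by positivity
  have hu : 0 < u := ht.trans_le hj₁
  calc M ≤ w (2 ^ j * s) * (f (2 ^ j * s) / (2 ^ j * s)) := hT _ (by linarith)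
    _ ≤ w (2 ^ j * s) * (f u / u) :=
        mul_le_mul_of_nonneg_left (hf.div_self_le_div_self hf0 ht hj₁) (hw0 _)
    _ = w (2 ^ j * s) * f u / u := (mul_div_assoc _ _ _).symm
    _ ≤ chordSup f w s u / u := by
        gcongr; exact mul_le_chordSup_of_mem hf hfm hf0 hs hw0 hw hj₁ hj₂

lemma isLittleO_chordSup (hf : ConvexOn ℝ (Ici 0) f) (hfm : MonotoneOn f (Ici 0))
    (hf0 : f 0 = 0) (hs : 0 < s) (hw0 : ∀ t, 0 ≤ w t) (hw : AntitoneOn w (Ici s))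
    (hK0 : 0 < K) (hK : ∀ u, s ≤ u → f (2 * u) ≤ K * f u) (hw_lim : Tendsto w atTop (𝓝 0))
    (hfu : Tendsto (fun u => f u / u) atTop atTop) : chordSup f w s =o[atTop] f := by
  refine IsLittleO.of_bound fun ε hε => ?_
  obtain ⟨T, hT⟩ := eventually_atTop.1 (hw_lim.eventually (eventually_le_nhds (div_pos hε hK0)))
  filter_upwards [eventually_ge_atTop s, eventually_add_mul_le_mul hfu 0 1 hε,
    eventually_add_mul_le_mul hfu (w s * f T) (w s * slope f T (2 * T)) hε] with u hsu hid haff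
  have hu0 : 0 ≤ u := hs.le.trans hsu
  rw [Real.norm_of_nonneg (hu0.trans self_le_chordSup),
    Real.norm_of_nonneg (hfm.apply_nonneg hf0 hu0)]
  refine chordSup_le (by linarith) fun j => ?_
  have ht : 0 < 2 ^ j * s := by positivity
  rcases le_or_gt T (2 ^ j * s) with hTt | htT
  · calc chordPiece f w (2 ^ j * s) u ≤ w (2 ^ j * s) * f (2 * u) :=
          chordPiece_le hf hfm ht (hw0 _) hu0
      _ ≤ ε / K * (K * f u) :=
          mul_le_mul (hT _ hTt) (hK u hsu) (hfm.apply_nonneg hf0 (by linarith)) (by positivity)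
      _ = ε * f u := by field_simp
  · -- the early chords are all dominated by one affine function
    have hT0 : 0 ≤ T := ht.le.trans htT.le
    calc chordPiece f w (2 ^ j * s) u
        ≤ w (2 ^ j * s) * (f T + slope f T (2 * T) * u) :=
          mul_le_mul_of_nonneg_left (hf.chord_two_mul_le_of_le hfm ht htT.le hu0) (hw0 _)
      _ ≤ w s * (f T + slope f T (2 * T) * u) :=
          mul_le_mul_of_nonneg_right (hw self_mem_Ici (le_dyadic hs j) (le_dyadic hs j))
            (add_nonneg (hfm.apply_nonneg hf0 hT0)
              (mul_nonneg (slope_two_mul_nonneg hfm hT0) hu0))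
      _ = w s * f T + w s * slope f T (2 * T) * u := by ring
      _ ≤ ε * f u := haff

end ChordSup

lemma exists_weight_of_isLittleO {f β : ℝ → ℝ} (hfpos : ∀ u, 0 < u → 0 < f u)
    (hfu : Tendsto (fun u => f u / u) atTop atTop) (hβ : β =o[atTop] f) (u₀ : ℝ) :
    ∃ s, 0 < s ∧ u₀ ≤ s ∧ ∃ w : ℝ → ℝ, (∀ t, 0 ≤ w t) ∧ AntitoneOn w (Ici s) ∧
      Tendsto w atTop (𝓝 0) ∧ Tendsto (fun t => w t * (f t / t)) atTop atTop ∧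
      ∀ t u, s ≤ t → t ≤ u → β u ≤ w t * f u := by
  -- `√(v / f v) → 0`, yet `√(v / f v) * (f v / v) = √(f v / v) → ∞`
  set ρ : ℝ → ℝ := fun v => max (β v / f v) √(v / f v)
  have hρ0 : ∀ v, 0 ≤ ρ v := fun v => le_max_of_le_right (Real.sqrt_nonneg _)
  have hρ : Tendsto ρ atTop (𝓝 0) := by
    have hinv : Tendsto (fun v => v / f v) atTop (𝓝 0) :=
      hfu.inv_tendsto_atTop.congr fun v => by simp only [Pi.inv_apply, inv_div]
    simpa using hβ.tendsto_div_nhds_zero.max hinv.sqrt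
  obtain ⟨s₁, hs₁⟩ := eventually_atTop.1 (hρ.eventually (eventually_le_nhds one_pos))
  set s := max (max s₁ u₀) 1
  have hs : 0 < s := zero_lt_one.trans_le (le_max_right _ _)
  have hs₁s : s₁ ≤ s := (le_max_left _ _).trans (le_max_left _ _)
  have hbdd : ∀ t, s ≤ t → BddAbove (ρ '' Ici t) := fun t ht =>
    ⟨1, by rintro _ ⟨v, hv, rfl⟩; exact hs₁ v (hs₁s.trans (ht.trans hv))⟩
  refine ⟨s, hs, (le_max_right _ _).trans (le_max_left _ _), tailSup ρ, tailSup_nonneg hρ0,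
    antitoneOn_tailSup (hbdd s le_rfl), tendsto_tailSup hρ0 hρ, ?_, fun t u hst htu => ?_⟩
  · refine tendsto_atTop_mono' atTop ?_ (Real.tendsto_sqrt_atTop.comp hfu)
    filter_upwards [eventually_ge_atTop s] with t ht
    have hft : 0 < f t / t := div_pos (hfpos t (hs.trans_le ht)) (hs.trans_le ht)
    calc √(f t / t) = √(t / f t) * (f t / t) := by
          rw [← inv_div (f t) t, Real.sqrt_inv, inv_mul_eq_div, Real.div_sqrt]
      _ ≤ tailSup ρ t * (f t / t) := mul_le_mul_of_nonneg_right
          ((le_max_right _ _).trans (le_tailSup (hbdd t ht) le_rfl)) hft.le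
  · have hfu : 0 < f u := hfpos u (hs.trans_le (hst.trans htu))
    calc β u = β u / f u * f u := (div_mul_cancel₀ _ hfu.ne').symm
      _ ≤ tailSup ρ t * f u := mul_le_mul_of_nonneg_right
          ((le_max_left _ _).trans (le_tailSup (hbdd t hst) htu)) hfu.le

theorem exists_convex_between_of_isLittleO {f β : ℝ → ℝ} (hf0 : f 0 = 0)
    (hfmono : StrictMonoOn f (Ici 0)) (hf : ConvexOn ℝ (Ici 0) f)
    (hfu : Tendsto (fun u => f u / u) atTop atTop) (hfΔ : Delta2 f) (hβ : β =o[atTop] f) :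
    ∃ γ : ℝ → ℝ, γ 0 = 0 ∧ StrictMonoOn γ (Ici 0) ∧ ConvexOn ℝ (Ici 0) γ ∧
      (∀ u, 0 ≤ u → 0 ≤ γ u) ∧ Tendsto (fun u => γ u / u) atTop atTop ∧ Delta2 γ ∧
      (∃ u₀ : ℝ, 0 < u₀ ∧ ∀ u ≥ u₀, β u ≤ γ u) ∧ γ =o[atTop] f := by
  have hfm := hfmono.monotoneOn
  obtain ⟨c, hc, u₀, -, hΔ⟩ := hfΔ
  obtain ⟨s, hs, hu₀s, w, hw0, hw, hw_lim, hwf, hβw⟩ := exists_weight_of_isLittleO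
    (fun u hu => hf0 ▸ hfmono self_mem_Ici hu.le hu) hfu hβ u₀
  have hK : ∀ u, s ≤ u → f (2 * u) ≤ c * f u := fun u hu => hΔ u (hu₀s.trans hu)
  have hγ0 := chordSup_zero hf hfm hf0 hs hw0
  have hγconv := convexOn_chordSup hf hfm hf0 hs hw0 hw
  refine ⟨chordSup f w s, hγ0,
    hγconv.strictMonoOn_of_pos hγ0 fun x hx => hx.trans_le self_le_chordSup, hγconv,
    fun u hu => hu.trans self_le_chordSup, tendsto_chordSup_div_atTop hf hfm hf0 hs hw0 hw hwf,
    ⟨max 3 (c ^ 2), by positivity, s, hs, fun u hu =>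
      chordSup_two_mul_le hf hfm hf0 hs hw0 hw hc.le hK hu⟩,
    ⟨s, hs, fun u hu => ?_⟩, isLittleO_chordSup hf hfm hf0 hs hw0 hw hc hK hw_lim hfu⟩
  obtain ⟨j, hj₁, hj₂⟩ := exists_dyadic_mem hs hu
  exact (hβw _ u (le_dyadic hs j) hj₁).trans (mul_le_chordSup_of_mem hf hfm hf0 hs hw0 hw hj₁ hj₂)

lemma Delta2.sub_const {α : ℝ → ℝ} (hα : Delta2 α) (hαtop : Tendsto α atTop atTop) (A : ℝ) :
    Delta2 (fun u => α u - A) := by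
  obtain ⟨c, hc, u₀, hu₀, hΔ⟩ := hα
  obtain ⟨u₁, hu₁⟩ := eventually_atTop.1 (hαtop.eventually_ge_atTop (2 * |A|))
  refine ⟨2 * c + 1, by positivity, max u₀ u₁, lt_max_of_lt_left hu₀, fun u hu => ?_⟩
  have h₁ := hΔ u ((le_max_left _ _).trans hu)
  have h₂ := hu₁ u ((le_max_right _ _).trans hu)
  nlinarith [le_abs_self A, neg_abs_le A, mul_le_mul_of_nonneg_left h₂ hc.le]

lemma tendsto_atTop_of_div_self {g : ℝ → ℝ} (hg : Tendsto (fun u => g u / u) atTop atTop) :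
    Tendsto g atTop atTop :=
  (hg.atTop_mul_atTop₀ tendsto_id).congr'
    ((eventually_ne_atTop 0).mono fun _ hu => div_mul_cancel₀ _ hu)

theorem exists_gamma_between_general (α β : ℝ → ℝ)
    (hαmono : StrictMonoOn α (Set.Ici 0))
    (hαconv : ConvexOn ℝ (Set.Ici 0) α)
    (hαinf : Filter.Tendsto (fun u => α u / u) Filter.atTop Filter.atTop)
    (hαΔ : Delta2 α)
    (hβα : Filter.Tendsto (fun u => β u / α u) Filter.atTop (nhds 0)) :
    ∃ γ : ℝ → ℝ,
      γ 0 = 0 ∧ StrictMonoOn γ (Set.Ici 0) ∧ ConvexOn ℝ (Set.Ici 0) γ ∧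
      (∀ u, 0 ≤ u → 0 ≤ γ u) ∧
      Filter.Tendsto (fun u => γ u / u) Filter.atTop Filter.atTop ∧
      Delta2 γ ∧
      (∃ u₀ : ℝ, 0 < u₀ ∧ ∀ u ≥ u₀, β u ≤ γ u) ∧
      Filter.Tendsto (fun u => γ u / α u) Filter.atTop (nhds 0) := by
  have hαtop := tendsto_atTop_of_div_self hαinf
  have hfα : (fun u => α u - α 0) ~[atTop] α := by
    simpa only [sub_eq_add_neg] using IsEquivalent.refl.add_const_of_norm_tendsto_atTop
      (c := -α 0) (tendsto_norm_atTop_atTop.comp hαtop)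
  have hfu : Tendsto (fun u => (α u - α 0) / u) atTop atTop := by
    have h0 : Tendsto (fun u => -α 0 / u) atTop (𝓝 0) := tendsto_const_nhds.div_atTop tendsto_id
    exact (hαinf.atTop_add h0).congr fun u => by ring
  have hβ : β =o[atTop] fun u => α u - α 0 :=
    ((isLittleO_iff_tendsto' ((hαtop.eventually_gt_atTop 0).mono fun _ hu h =>
      absurd h hu.ne')).2 hβα).trans_isBigO hfα.isBigO_symm
  obtain ⟨γ, hγ0, hγmono, hγconv, hγ_nonneg, hγu, hγΔ, hβγ, hγf⟩ :=
    exists_convex_between_of_isLittleO (f := fun u => α u - α 0) (sub_self _)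
      (fun x hx y hy hxy => sub_lt_sub_right (hαmono hx hy hxy) _)
      (hαconv.sub (concaveOn_const _ (convex_Ici 0))) hfu (hαΔ.sub_const hαtop _) hβ
  exact ⟨γ, hγ0, hγmono, hγconv, hγ_nonneg, hγu, hγΔ, hβγ,
    (hγf.trans_isBigO hfα.isBigO).tendsto_div_nhds_zero⟩

theorem exists_gamma_between (α β : ℝ → ℝ)
    (hα0 : ∀ u, 0 ≤ u → 0 ≤ α u)
    (hαmono : StrictMonoOn α (Set.Ici 0))
    (hαconv : ConvexOn ℝ (Set.Ici 0) α)
    (hαinf : Filter.Tendsto (fun u => α u / u) Filter.atTop Filter.atTop)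
    (hαΔ : Delta2 α)
    (hβ0 : ∀ u, 0 ≤ u → 0 ≤ β u)
    (hβα : Filter.Tendsto (fun u => β u / α u) Filter.atTop (nhds 0)) :
    ∃ γ : ℝ → ℝ,
      γ 0 = 0 ∧ StrictMonoOn γ (Set.Ici 0) ∧ ConvexOn ℝ (Set.Ici 0) γ ∧
      (∀ u, 0 ≤ u → 0 ≤ γ u) ∧
      Filter.Tendsto (fun u => γ u / u) Filter.atTop Filter.atTop ∧
      Delta2 γ ∧
      (∃ u₀ : ℝ, 0 < u₀ ∧ ∀ u ≥ u₀, β u ≤ γ u) ∧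
      Filter.Tendsto (fun u => γ u / α u) Filter.atTop (nhds 0) :=
  exists_gamma_between_general α β hαmono hαconv hαinf hαΔ hβα
end
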